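/- arXiv:2011.10650 — 4 statements merged into one kernel-verified Lean document; each statement's English description precedes it below -/
import Mathlib

section
/- Let α be a countable type, N a natural number, and p_Z a probability mass function on Z := (Fin N → α). Define the joint probability mass function p on Z × Z by p(z,x) = p_Z(z) if x = z and p(z,x) = 0 otherwise (an identity decoder), and for each x take the approximate posterior q_x to be the Dirac mass at x (a deterministic copy encoder). Then for every x with p_Z(x) > 0, ELBO(q_x, p, x) = log p_Z(x) = log p_X(x); i.e., a hierarchical VAE with deterministic copy encoder and identity decoder attains the exact log-likelihood of the autoregressive prior, so VAEs with data-dimension many stochastic layers generalize autoregressive models. -/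
/-- **VAEs generalize autoregressive models.** Let `p_Z` be a PMF on `Z := Fin N → α`,
let `p` be the joint PMF given by the identity decoder `p (z, x) = p_Z z` if `x = z` and
`0` otherwise, and for each `x` let the approximate posterior `q x` be the Dirac mass at
`x` (deterministic copy encoder). Then for every `x` with `p_Z x > 0`, the ELBO
`∑' z, q x z * (log (p (z, x)) - log (q x z))` equals `log (p_Z x)`, which equals the
log-evidence `log (∑' z, p (z, x))`. -/
theorem copy_encoder_identity_decoder_elbo_exact {α : Type*} [Countable α] [DecidableEq α] (N : ℕ)
    (p_Z : (Fin N → α) → ℝ)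
    (hp_nonneg : ∀ z, 0 ≤ p_Z z) (hp_sum : ∑' z, p_Z z = 1)
    (p : ((Fin N → α) × (Fin N → α)) → ℝ)
    (hp : ∀ z x, p (z, x) = if x = z then p_Z z else 0)
    (q : (Fin N → α) → (Fin N → α) → ℝ)
    (hq : ∀ x z, q x z = if z = x then 1 else 0)
    (x : Fin N → α) (hx : 0 < p_Z x) :
    (∑' z, q x z * (Real.log (p (z, x)) - Real.log (q x z))) = Real.log (p_Z x) ∧
      Real.log (p_Z x) = Real.log (∑' z, p (z, x)) := by
  have h1 : (∑' z, q x z * (Real.log (p (z, x)) - Real.log (q x z))) = Real.log (p_Z x) := by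
    rw [tsum_eq_single x]
    · simp [hq, hp]
    · intro z hz; simp [hq, hz]
  have h2 : (∑' z, p (z, x)) = p_Z x := by
    rw [tsum_eq_single x]
    · simp [hp]
    · intro z hz; simp [hp, Ne.symm hz]
  exact ⟨h1, by rw [h2]⟩
end

section
/- Let N be a natural number and f : (Fin N → ℝ) → (Fin N → ℝ) a map that is autoregressive, i.e., for every index i and all inputs x, y with x j = y j for all j ≤ i, one has (f x) i = (f y) i. Suppose f is differentiable at a point ε. Then the Jacobian matrix J of f at ε, with entries J i j = the partial derivative of the i-th output coordinate with respect to the j-th input coordinate at ε, satisfies J i j = 0 whenever j > i (it is lower triangular), and consequently det J = ∏_i J i i; i.e., the Jacobian determinant of an autoregressive map is the product of its diagonal partial derivatives. -/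
/-- **Jacobian of an autoregressive map is lower triangular with product determinant.**
If `f : (Fin N → ℝ) → (Fin N → ℝ)` is autoregressive (output coordinate `i` depends only on
input coordinates `j ≤ i`) and has Fréchet derivative `f'` at `ε`, then its Jacobian matrix
`J i j = f' (Pi.single j 1) i` vanishes for `j > i`, and `det J = ∏ i, J i i`. -/
theorem autoregressive_jacobian_lower_triangular_det {N : ℕ}
    (f : (Fin N → ℝ) → (Fin N → ℝ))
    (hf : ∀ (i : Fin N) (x y : Fin N → ℝ), (∀ j : Fin N, j ≤ i → x j = y j) → f x i = f y i)
    (ε : Fin N → ℝ) (f' : (Fin N → ℝ) →L[ℝ] (Fin N → ℝ))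
    (hd : HasFDerivAt f f' ε) :
    (∀ i j : Fin N, i < j → f' (Pi.single j 1) i = 0) ∧
      Matrix.det (Matrix.of fun i j : Fin N => f' (Pi.single j 1) i) =
        ∏ i : Fin N, f' (Pi.single i 1) i := by
  have hzero : ∀ i j : Fin N, i < j → f' (Pi.single j 1) i = 0 := by
    intro i j hij
    set v : Fin N → ℝ := Pi.single j 1 with hv
    -- the line t ↦ ε + t • v
    have hline : HasDerivAt (fun t : ℝ => ε + t • v) v 0 := by
      simpa using ((hasDerivAt_id (0 : ℝ)).smul_const v).const_add ε
    have hcomp : HasDerivAt (fun t : ℝ => f (ε + t • v)) (f' v) 0 := by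
      have hd' : HasFDerivAt f f' (ε + (0 : ℝ) • v) := by
        rw [show ε + (0 : ℝ) • v = ε by simp]; exact hd
      exact hd'.comp_hasDerivAt 0 hline
    have hproj : HasDerivAt (fun t : ℝ => f (ε + t • v) i) (f' v i) 0 :=
      (hasDerivAt_pi.mp hcomp) i
    -- but this function is constant
    have hconst : (fun t : ℝ => f (ε + t • v) i) = fun _ => f ε i := by
      funext t
      apply hf
      intro k hk
      have hkj : k ≠ j := fun h => absurd (h ▸ hk) (not_le.mpr hij)
      simp [hv, Pi.single_apply, hkj]
    have : HasDerivAt (fun _ : ℝ => f ε i) (f' v i) 0 := hconst ▸ hproj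
    have := this.unique (hasDerivAt_const 0 (f ε i))
    simpa using this
  refine ⟨hzero, ?_⟩
  exact Matrix.det_of_lowerTriangular _ (fun i j h => hzero i j h)
end

section
/- Let N be a natural number and f : (Fin N → ℝ) → (Fin N → ℝ) a map that is autoregressive, i.e., for every index i and all inputs x, y with x j = y j for all j ≤ i, one has (f x) i = (f y) i. Suppose that for every index i and every x, the one-variable map t ↦ (f (update x i t)) i, obtained by varying only the i-th input coordinate, is strictly monotone (strictly increasing). Then f is injective. -/
/-- **Autoregressive maps with strictly increasing conditionals are injective.**
If `f : (Fin N → ℝ) → (Fin N → ℝ)` is autoregressive (output coordinate `i` depends only on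
input coordinates `j ≤ i`) and for every `i` and `x` the one-variable map
`t ↦ f (Function.update x i t) i` is strictly increasing, then `f` is injective. -/
theorem autoregressive_strictMono_injective {N : ℕ}
    (f : (Fin N → ℝ) → (Fin N → ℝ))
    (hf : ∀ (i : Fin N) (x y : Fin N → ℝ), (∀ j : Fin N, j ≤ i → x j = y j) → f x i = f y i)
    (hmono : ∀ (i : Fin N) (x : Fin N → ℝ),
      StrictMono (fun t : ℝ => f (Function.update x i t) i)) :
    Function.Injective f := by
  intro x y hxy
  have key : ∀ n : ℕ, ∀ i : Fin N, (i : ℕ) = n → x i = y i := by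
    intro n
    induction n using Nat.strong_induction_on with
    | _ n ih =>
      intro i hi
      have h1 : f x i = f (Function.update y i (x i)) i := by
        apply hf
        intro j hj
        rcases eq_or_lt_of_le hj with h | h
        · subst h; simp
        · rw [Function.update_of_ne (fun he => absurd (he ▸ h) (lt_irrefl _))]
          exact ih (j : ℕ) (by omega) j rfl
      have h2 : f y i = f (Function.update y i (y i)) i := by
        rw [Function.update_eq_self]
      have h3 : f (Function.update y i (x i)) i = f (Function.update y i (y i)) i := by
        rw [← h1, ← h2, congrFun hxy i]
      exact (hmono i y).injective h3
  funext i
  exact key (i : ℕ) i rfl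
end

section
/- Let N be a natural number and f : (Fin N → ℝ) → (Fin N → ℝ) a map that is autoregressive, i.e., for every index i and all inputs x, y with x j = y j for all j ≤ i, one has (f x) i = (f y) i. Suppose that for every index i and every x, the one-variable map t ↦ (f (update x i t)) i is continuous, strictly increasing, and surjective onto ℝ. Then f is a bijection of (Fin N → ℝ) onto itself; i.e., an autoregressive flow whose per-coordinate conditional transformations are increasing continuous surjections is invertible on all of ℝ^N. -/
/-- **Autoregressive flows with increasing continuous surjective conditionals are bijective.**
If `f : (Fin N → ℝ) → (Fin N → ℝ)` is autoregressive (output coordinate `i` depends only on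
input coordinates `j ≤ i`) and for every `i` and `x` the one-variable map
`t ↦ f (Function.update x i t) i` is continuous, strictly increasing, and surjective onto `ℝ`,
then `f` is a bijection of `Fin N → ℝ` onto itself. -/
theorem autoregressive_flow_bijective {N : ℕ}
    (f : (Fin N → ℝ) → (Fin N → ℝ))
    (hf : ∀ (i : Fin N) (x y : Fin N → ℝ), (∀ j : Fin N, j ≤ i → x j = y j) → f x i = f y i)
    (hcont : ∀ (i : Fin N) (x : Fin N → ℝ),
      Continuous (fun t : ℝ => f (Function.update x i t) i))
    (hmono : ∀ (i : Fin N) (x : Fin N → ℝ),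
      StrictMono (fun t : ℝ => f (Function.update x i t) i))
    (hsurj : ∀ (i : Fin N) (x : Fin N → ℝ),
      Function.Surjective (fun t : ℝ => f (Function.update x i t) i)) :
    Function.Bijective f := by
  constructor
  · -- injectivity
    intro x y hxy
    have key : ∀ n : ℕ, ∀ i : Fin N, i.val = n → x i = y i := by
      intro n
      induction n using Nat.strong_induction_on with
      | _ n ih =>
        intro i hi
        have h1 : f x i = f (Function.update y i (x i)) i := by
          apply hf
          intro j hj
          by_cases h : j = i
          · subst h; simp
          · rw [Function.update_of_ne h]
            exact ih j.val (by
              have : j < i := lt_of_le_of_ne hj h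
              omega) j rfl
        have h2 : f y i = f (Function.update y i (y i)) i := by
          rw [Function.update_eq_self]
        have h3 : f (Function.update y i (x i)) i = f (Function.update y i (y i)) i := by
          rw [← h1, ← h2, congrFun hxy i]
        exact (hmono i y).injective h3
    funext i
    exact key i.val i rfl
  · -- surjectivity
    intro y
    have key : ∀ n : ℕ, n ≤ N → ∃ x : Fin N → ℝ, ∀ i : Fin N, i.val < n → f x i = y i := by
      intro n
      induction n with
      | zero => exact fun _ => ⟨fun _ => 0, fun i hi => absurd hi (by omega)⟩
      | succ n ih =>
        intro hn
        obtain ⟨x, hx⟩ := ih (by omega)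
        set i₀ : Fin N := ⟨n, by omega⟩ with hi₀
        obtain ⟨t, ht⟩ := hsurj i₀ x (y i₀)
        refine ⟨Function.update x i₀ t, fun i hi => ?_⟩
        rcases lt_or_eq_of_le (Nat.lt_succ_iff.mp hi) with h | h
        · rw [show f (Function.update x i₀ t) i = f x i from ?_, hx i h]
          apply hf
          intro j hj
          rw [Function.update_of_ne]
          intro hji
          have : (j : ℕ) = n := by rw [hji]
          have : (j : ℕ) ≤ i.val := hj
          omega
        · have : i = i₀ := Fin.ext h
          rw [this]
          exact ht
    obtain ⟨x, hx⟩ := key N le_rfl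
    exact ⟨x, funext fun i => hx i i.isLt⟩
end
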